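/- (Cut lower bound, Lemma 7 of the paper.) Let C : V → ℝ≥0∞ satisfy C v ≤ cost v for every vertex v, and let F ⊆ V be a set of vertices with v0 ∈ F. Then for every vertex x with x ∉ F, the infimum of C u + w u v, taken over all edges E u v with u ∈ F and v ∉ F, is a lower bound on cost x; that is, ⨅ {C u + w u v : E u v ∧ u ∈ F ∧ v ∉ F} ≤ cost x. -/

import Mathlib

open scoped ENNReal

variable {V : Type*}

/-- `IsPath E v0 x p` means `p` is a finite sequence of vertices starting at `v0`,
ending at `x`, with consecutive vertices joined by edges of `E`. -/
def IsPath (E : V → V → Prop) (v0 x : V) (p : List V) : Prop :=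
  p.Chain' E ∧ p.head? = some v0 ∧ p.getLast? = some x

/-- The cost of a path: the sum of the weights of its consecutive edges. -/
noncomputable def pathCost (w : V → V → ℝ≥0∞) (p : List V) : ℝ≥0∞ :=
  ((p.zip p.tail).map fun q => w q.1 q.2).sum

/-- `cost E w v0 x` : the infimum of the costs of all paths from `v0` to `x`
(`∞` if `x` is unreachable from `v0`). -/
noncomputable def cost (E : V → V → Prop) (w : V → V → ℝ≥0∞) (v0 x : V) : ℝ≥0∞ :=
  ⨅ p : {p : List V // IsPath E v0 x p}, pathCost w p.1

/-
A path from `v0 ∈ F` to `x ∉ F` must leave `F` along some edge `(u, v)`. The part of the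
path up to `u` is itself a path from `v0` to `u`, so it costs at least `cost u ≥ C u`, and the
edge `(u, v)` adds `w u v`.
-/

theorem List.exists_eq_append_cons_cons_of_head_of_not_getLast {α : Type*} {P : α → Prop} :
    ∀ {l : List α} {a b : α}, l.head? = some a → l.getLast? = some b → P a → ¬ P b →
      ∃ l₁ u v l₂, l = l₁ ++ u :: v :: l₂ ∧ P u ∧ ¬ P v
  | [], _, _, ha, _, _, _ => by simp at ha
  | [c], a, b, ha, hb, hPa, hPb => by
      simp only [List.head?_cons, List.getLast?_singleton, Option.some.injEq] at ha hb
      exact absurd (hb ▸ ha ▸ hPa) hPb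
  | c :: d :: t, a, b, ha, hb, hPa, hPb => by
      obtain rfl : c = a := by simpa using ha
      by_cases hPd : P d
      · obtain ⟨l₁, u, v, l₂, hdt, hu, hv⟩ :=
          exists_eq_append_cons_cons_of_head_of_not_getLast (l := d :: t) rfl
            (by simpa using hb) hPd hPb
        exact ⟨c :: l₁, u, v, l₂, by rw [hdt, List.cons_append], hu, hv⟩
      · exact ⟨[], c, d, t, rfl, hPa, hPd⟩

section

variable {E : V → V → Prop} {w : V → V → ℝ≥0∞} {v0 x : V}

theorem pathCost_cons_cons (a b : V) (l : List V) :
    pathCost w (a :: b :: l) = w a b + pathCost w (b :: l) := by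
  simp [pathCost]

theorem pathCost_append_cons (u : V) (l₂ : List V) :
    ∀ l₁ : List V, pathCost w (l₁ ++ u :: l₂) = pathCost w (l₁ ++ [u]) + pathCost w (u :: l₂)
  | [] => by simp [pathCost]
  | [a] => by simp [pathCost]
  | a :: b :: t => by
      simp only [List.cons_append, pathCost_cons_cons]
      rw [← List.cons_append, ← List.cons_append, pathCost_append_cons u l₂ (b :: t), add_assoc]

theorem IsPath.prefix {l₁ l₂ : List V} {u : V} (h : IsPath E v0 x (l₁ ++ u :: l₂)) :
    IsPath E v0 u (l₁ ++ [u]) := by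
  obtain ⟨hchain, hhead, -⟩ := h
  refine ⟨?_, ?_, by simp⟩
  · rw [← List.singleton_append, ← List.append_assoc] at hchain
    exact hchain.left_of_append
  · cases l₁ <;> simpa using hhead

theorem cost_le_pathCost {p : List V} (h : IsPath E v0 x p) : cost E w v0 x ≤ pathCost w p :=
  iInf_le_of_le ⟨p, h⟩ le_rfl

end

theorem cut_lowerBound_general (E : V → V → Prop) (w : V → V → ℝ≥0∞)
    (v0 : V) (C : V → ℝ≥0∞) (hC : ∀ v, C v ≤ cost E w v0 v)
    (F : Set V) (hv0 : v0 ∈ F) (x : V) (hx : x ∉ F) :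
    (⨅ e : {e : V × V // E e.1 e.2 ∧ e.1 ∈ F ∧ e.2 ∉ F}, (C e.1.1 + w e.1.1 e.1.2))
      ≤ cost E w v0 x := by
  refine le_iInf fun ⟨p, hp⟩ => ?_
  obtain ⟨l₁, u, v, l₂, rfl, hu, hv⟩ :=
    List.exists_eq_append_cons_cons_of_head_of_not_getLast hp.2.1 hp.2.2 hv0 hx
  have huv : E u v := (List.isChain_cons_cons.mp hp.1.right_of_append).1
  calc _ ≤ C u + w u v := iInf_le_of_le ⟨(u, v), huv, hu, hv⟩ le_rfl
    _ ≤ pathCost w (l₁ ++ [u]) + w u v := by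
      gcongr
      exact (hC u).trans (cost_le_pathCost hp.prefix)
    _ ≤ pathCost w (l₁ ++ u :: v :: l₂) := by
      rw [pathCost_append_cons u (v :: l₂), pathCost_cons_cons, ← add_assoc]
      exact le_self_add

/-- Cut lower bound (Lemma 7): if `C` is a pointwise lower bound on `cost`,
`v0 ∈ F`, and `x ∉ F`, then the infimum of `C u + w u v` over all crossing edges
(from `F` to its complement) is a lower bound on `cost x`. -/
theorem cut_lowerBound [Fintype V] (E : V → V → Prop) (w : V → V → ℝ≥0∞)
    (hpos : ∀ u v, E u v → 0 < w u v) (hfin : ∀ u v, E u v → w u v < ⊤)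
    (v0 : V) (C : V → ℝ≥0∞) (hC : ∀ v, C v ≤ cost E w v0 v)
    (F : Set V) (hv0 : v0 ∈ F) (x : V) (hx : x ∉ F) :
    (⨅ e : {e : V × V // E e.1 e.2 ∧ e.1 ∈ F ∧ e.2 ∉ F}, (C e.1.1 + w e.1.1 e.1.2))
      ≤ cost E w v0 x :=
  cut_lowerBound_general E w v0 C hC F hv0 x hx
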